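/- The functional a ↦ ∫_{D_q} a is a faithful state: ∫_{D_q} 1 = 1; if a is a positive bounded operator then ∫_{D_q} a ≥ 0, and if in addition ∫_{D_q} a = 0 then a = 0. Moreover, if b is scalable with witness J(b) (b∘j = j∘J(b)) then ∫_{D_q}(ab) = ∫_{D_q}(J(b)·a) for every bounded operator a, and if a is scalable then ∫_{D_q} J(a) = ∫_{D_q} a. -/

import Mathlib

/-!
`∫_{D_q} a = (1 - q) ∑ₖ qᵏ ⟪eₖ, a eₖ⟫` is a weighted trace of `a` against the Hilbert basis
`(eₖ)`. Positivity holds termwise, and faithfulness follows because a positive operator `a = s† s`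
with `⟪x, a x⟫ = ‖s x‖² = 0` kills `x`. On matrix entries, `b j = j J(b)` reads
`qᵏ b_{mk} = qᵐ J(b)_{mk}`, so `∫ ab` and `∫ J(b) a` are the two iterated sums of one absolutely
summable double series; its diagonal case `m = k` gives `∫ J(a) = ∫ a` termwise.
-/

open MeasureTheory InnerProductSpace

noncomputable section

/-- `H = ℓ²(ℕ, ℂ)`. -/
abbrev H : Type := lp (fun _ : ℕ => ℂ) 2

/-- The standard orthonormal basis `e n` of `ℓ²(ℕ, ℂ)`. -/
noncomputable def e (n : ℕ) : H := lp.single 2 n 1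

/-- The integral `∫_{D_q} a = (1−q) Σ_k q^k ⟨e_k, a e_k⟩`. -/
noncomputable def intDq (q : ℝ) (a : H →L[ℂ] H) : ℂ :=
  ((1 - q : ℝ) : ℂ) * ∑' k : ℕ, ((q : ℂ) ^ k) * (inner ℂ (e k) (a (e k)) : ℂ)

open scoped ComplexOrder

variable {ι E : Type*} [NormedAddCommGroup E] [InnerProductSpace ℂ E]

theorem ContinuousLinearMap.IsPositive.apply_eq_zero_of_inner_self_apply_eq_zero
    [CompleteSpace E] {T : E →L[ℂ] E} (hT : T.IsPositive) {x : E} (hx : ⟪x, T x⟫_ℂ = 0) :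
    T x = 0 := by
  obtain ⟨S, rfl⟩ :=
    CStarAlgebra.nonneg_iff_eq_star_mul_self.mp ((nonneg_iff_isPositive T).mpr hT)
  have hSx : S x = 0 := by
    rwa [mul_apply_eq_comp, star_eq_adjoint, adjoint_inner_right, inner_self_eq_zero] at hx
  rw [mul_apply_eq_comp, hSx, map_zero]

namespace HilbertBasis

variable (v : HilbertBasis ι ℂ E)

theorem ext_continuousLinearMap {S T : E →L[ℂ] E} (h : ∀ i, S (v i) = T (v i)) : S = T :=
  ContinuousLinearMap.ext_on (Submodule.dense_iff_topologicalClosure_eq_top.mpr v.dense_span)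
    (by rintro _ ⟨i, rfl⟩; exact h i)

theorem hasSum_inner_apply (T : E →L[ℂ] E) (x y : E) :
    HasSum (fun i => ⟪v i, x⟫_ℂ * ⟪y, T (v i)⟫_ℂ) ⟪y, T x⟫_ℂ := by
  simpa [v.repr_apply_apply, inner_smul_right] using
    (v.hasSum_repr x).mapL ((innerSL ℂ y).comp T)

theorem inner_apply_of_apply_eq_smul {j : E →L[ℂ] E} {w : ι → ℂ}
    (hj : ∀ i, j (v i) = w i • v i) (y : E) (i : ι) : ⟪v i, j y⟫_ℂ = w i * ⟪v i, y⟫_ℂ := by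
  classical
  refine (v.hasSum_inner_apply j y (v i)).unique ?_
  convert hasSum_single i fun k hk => ?_ using 1
  · simp [hj, v.orthonormal.1 i, mul_comm]
  · simp [hj, v.orthonormal.inner_eq_zero (Ne.symm hk)]

theorem summable_norm_inner_mul_norm_inner (x y : E) :
    Summable fun i => ‖⟪v i, x⟫_ℂ‖ * ‖⟪v i, y⟫_ℂ‖ := by
  simpa only [v.repr_apply_apply] using
    (lp.tsum_mul_le_mul_norm (p := 2) (q := 2) (by simpa using Real.HolderConjugate.two_two)
      (v.repr x) (v.repr y)).1

theorem tsum_norm_inner_mul_norm_inner_le (x y : E) :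
    ∑' i, ‖⟪v i, x⟫_ℂ‖ * ‖⟪v i, y⟫_ℂ‖ ≤ ‖x‖ * ‖y‖ := by
  simpa only [v.repr_apply_apply, LinearIsometryEquiv.norm_map] using
    (lp.tsum_mul_le_mul_norm (p := 2) (q := 2) (by simpa using Real.HolderConjugate.two_two)
      (v.repr x) (v.repr y)).2

theorem summable_weighted_norm_inner_mul_norm_inner {w : ι → ℂ} (hw : Summable fun i => ‖w i‖)
    (S T : E →L[ℂ] E) :
    Summable fun p : ι × ι => ‖w p.1‖ * (‖⟪v p.2, S (v p.1)⟫_ℂ‖ * ‖⟪v p.2, T (v p.1)⟫_ℂ‖) := by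
  have hrow : ∀ k, ∑' m, ‖⟪v m, S (v k)⟫_ℂ‖ * ‖⟪v m, T (v k)⟫_ℂ‖ ≤ ‖S‖ * ‖T‖ := fun k =>
    calc _ ≤ ‖S (v k)‖ * ‖T (v k)‖ := v.tsum_norm_inner_mul_norm_inner_le _ _
      _ ≤ ‖S‖ * ‖T‖ := by
        gcongr <;> exact (ContinuousLinearMap.le_opNorm _ _).trans_eq (by simp [v.orthonormal.1 k])
  refine (summable_prod_of_nonneg fun _ => by positivity).mpr ⟨fun k => ?_, ?_⟩
  · exact (v.summable_norm_inner_mul_norm_inner (S (v k)) (T (v k))).mul_left ‖w k‖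
  · dsimp only
    refine (hw.mul_right (‖S‖ * ‖T‖)).of_nonneg_of_le (fun _ => by positivity) fun k => ?_
    rw [tsum_mul_left]
    exact mul_le_mul_of_nonneg_left (hrow k) (norm_nonneg _)

def weightedTrace (w : ι → ℂ) (T : E →L[ℂ] E) : ℂ :=
  ∑' i, w i * ⟪v i, T (v i)⟫_ℂ

variable {v} {w : ι → ℂ}

theorem summable_weightedTrace (hw : Summable fun i => ‖w i‖) (T : E →L[ℂ] E) :
    Summable fun i => w i * ⟪v i, T (v i)⟫_ℂ := by
  refine Summable.of_norm <| (hw.mul_right ‖T‖).of_nonneg_of_le (fun _ => norm_nonneg _)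
    fun i => ?_
  rw [norm_mul]
  gcongr
  calc ‖⟪v i, T (v i)⟫_ℂ‖ ≤ ‖v i‖ * ‖T (v i)‖ := norm_inner_le_norm _ _
    _ ≤ ‖T‖ := by simpa [v.orthonormal.1 i] using T.le_opNorm (v i)

theorem weightedTrace_one : v.weightedTrace w 1 = ∑' i, w i := by
  simp [weightedTrace, v.orthonormal.1]

theorem weightedTrace_nonneg (hw : ∀ i, 0 ≤ w i) {T : E →L[ℂ] E} (hT : T.IsPositive) :
    0 ≤ v.weightedTrace w T :=
  tsum_nonneg fun i => mul_nonneg (hw i) (hT.inner_nonneg_right (v i))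

theorem eq_zero_of_weightedTrace_eq_zero [CompleteSpace E] (hw : Summable fun i => ‖w i‖)
    (hw_pos : ∀ i, 0 < w i) {T : E →L[ℂ] E} (hT : T.IsPositive) (h : v.weightedTrace w T = 0) :
    T = 0 := by
  have hsum : HasSum (fun i => w i * ⟪v i, T (v i)⟫_ℂ) 0 :=
    h ▸ (summable_weightedTrace hw T).hasSum
  have hterms := (hasSum_zero_iff_of_nonneg fun i =>
    mul_nonneg (hw_pos i).le (hT.inner_nonneg_right (v i))).mp hsum
  refine v.ext_continuousLinearMap fun i => ?_
  refine hT.apply_eq_zero_of_inner_self_apply_eq_zero ?_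
  simpa [(hw_pos i).ne'] using congrFun hterms i

theorem inner_apply_eq_of_comp_eq {j : E →L[ℂ] E} (hj : ∀ i, j (v i) = w i • v i)
    {b Jb : E →L[ℂ] E} (hb : b ∘L j = j ∘L Jb) (m k : ι) :
    w k * ⟪v m, b (v k)⟫_ℂ = w m * ⟪v m, Jb (v k)⟫_ℂ := by
  have := congrArg (fun T : E →L[ℂ] E => ⟪v m, T (v k)⟫_ℂ) hb
  simpa [hj, inner_smul_right, v.inner_apply_of_apply_eq_smul hj] using this

theorem weightedTrace_eq_of_comp_eq {j : E →L[ℂ] E} (hj : ∀ i, j (v i) = w i • v i)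
    {a Ja : E →L[ℂ] E} (ha : a ∘L j = j ∘L Ja) : v.weightedTrace w Ja = v.weightedTrace w a :=
  tsum_congr fun k => (inner_apply_eq_of_comp_eq hj ha k k).symm

theorem weightedTrace_comp_of_comp_eq [CompleteSpace E] (hw : Summable fun i => ‖w i‖)
    {j : E →L[ℂ] E} (hj : ∀ i, j (v i) = w i • v i) (a : E →L[ℂ] E) {b Jb : E →L[ℂ] E}
    (hb : b ∘L j = j ∘L Jb) : v.weightedTrace w (a ∘L b) = v.weightedTrace w (Jb ∘L a) := by
  have hbJ := inner_apply_eq_of_comp_eq hj hb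
  set g : ι → ι → ℂ := fun k m => w m * ⟪v m, Jb (v k)⟫_ℂ * ⟪v k, a (v m)⟫_ℂ
  have hrow : ∀ k, w k * ⟪v k, (a ∘L b) (v k)⟫_ℂ = ∑' m, g k m := fun k => by
    rw [ContinuousLinearMap.comp_apply, ← (v.hasSum_inner_apply a (b (v k)) (v k)).tsum_eq,
      ← tsum_mul_left]
    exact tsum_congr fun m => by rw [← mul_assoc, hbJ]
  have hcol : ∀ m, w m * ⟪v m, (Jb ∘L a) (v m)⟫_ℂ = ∑' k, g k m := fun m => by
    rw [ContinuousLinearMap.comp_apply, ← (v.hasSum_inner_apply Jb (a (v m)) (v m)).tsum_eq,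
      ← tsum_mul_left]
    exact tsum_congr fun k => by ring
  -- `‖g k m‖ = ‖w k‖ ‖⟪v m, b v k⟫‖ ‖⟪v m, a† v k⟫‖`
  have hg : Summable (Function.uncurry g) := by
    refine Summable.of_norm <|
      (v.summable_weighted_norm_inner_mul_norm_inner hw b a.adjoint).congr fun ⟨k, m⟩ => ?_
    simp only [Function.uncurry_apply_pair, g, ← hbJ, norm_mul, mul_assoc]
    rw [← a.adjoint_inner_left (v m) (v k), norm_inner_symm (a.adjoint (v k)) (v m)]
  calc v.weightedTrace w (a ∘L b) = ∑' k, ∑' m, g k m := tsum_congr hrow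
    _ = ∑' m, ∑' k, g k m := hg.tsum_comm.symm
    _ = v.weightedTrace w (Jb ∘L a) := (tsum_congr hcol).symm

end HilbertBasis

def stdHilbertBasis : HilbertBasis ℕ ℂ H := HilbertBasis.ofRepr (LinearIsometryEquiv.refl ℂ H)

theorem stdHilbertBasis_apply (n : ℕ) : stdHilbertBasis n = e n := by
  classical
  exact (stdHilbertBasis.repr_symm_single n).symm

theorem intDq_eq_weightedTrace (q : ℝ) (a : H →L[ℂ] H) :
    intDq q a = ((1 - q : ℝ) : ℂ) * stdHilbertBasis.weightedTrace (fun k => (q : ℂ) ^ k) a := by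
  simp only [intDq, HilbertBasis.weightedTrace, stdHilbertBasis_apply]

theorem stmt10 (q : ℝ) (hq0 : 0 < q) (hq1 : q < 1)
    (j : H →L[ℂ] H)
    (hj : ∀ n : ℕ, j (e n) = ((q : ℂ) ^ n) • e n) :
    intDq q 1 = 1 ∧
    (∀ a : H →L[ℂ] H, a.IsPositive →
      (0 ≤ (intDq q a).re ∧ (intDq q a).im = 0) ∧ (intDq q a = 0 → a = 0)) ∧
    (∀ a b Jb : H →L[ℂ] H, b.comp j = j.comp Jb →
      intDq q (a.comp b) = intDq q (Jb.comp a)) ∧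
    (∀ a Ja : H →L[ℂ] H, a.comp j = j.comp Ja → intDq q Ja = intDq q a) := by
  have hq : ‖(q : ℂ)‖ < 1 := by rwa [Complex.norm_real, Real.norm_of_nonneg hq0.le]
  have hw : Summable fun k => ‖(q : ℂ) ^ k‖ := summable_norm_geometric_of_norm_lt_one hq
  have hw_pos : ∀ k, 0 < (q : ℂ) ^ k := fun k => pow_pos (Complex.zero_lt_real.mpr hq0) k
  have hj' : ∀ n, j (stdHilbertBasis n) = (q : ℂ) ^ n • stdHilbertBasis n := by
    simpa only [stdHilbertBasis_apply] using hj
  have hc : (0 : ℂ) < ((1 - q : ℝ) : ℂ) := Complex.zero_lt_real.mpr (sub_pos.mpr hq1)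
  simp only [intDq_eq_weightedTrace]
  refine ⟨?_, fun a ha => ?_, fun a b Jb hb => ?_, fun a Ja ha => ?_⟩
  · rw [HilbertBasis.weightedTrace_one, tsum_geometric_of_norm_lt_one hq, Complex.ofReal_sub,
      Complex.ofReal_one, mul_inv_cancel₀ (by exact_mod_cast hc.ne')]
  · have h0 := mul_nonneg hc.le (HilbertBasis.weightedTrace_nonneg (v := stdHilbertBasis)
      (fun k => (hw_pos k).le) ha)
    refine ⟨⟨(Complex.nonneg_iff.mp h0).1, (Complex.nonneg_iff.mp h0).2.symm⟩, fun h => ?_⟩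
    exact HilbertBasis.eq_zero_of_weightedTrace_eq_zero hw hw_pos ha
      ((mul_eq_zero.mp h).resolve_left hc.ne')
  · rw [HilbertBasis.weightedTrace_comp_of_comp_eq hw hj' a hb]
  · rw [HilbertBasis.weightedTrace_eq_of_comp_eq hj' ha]
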